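/- There do not exist a finite set K ⊆ ℕ and a K-symmetric relation σ ⊆ I × I such that for every n ∈ ℕ the set {μ ∈ ℕ : ((1, n), (0, μ)) ∈ σ} has exactly n + 1 elements. (This is the combinatorial core of the fact that the Ackermann axiom choice_h^{1,1} fails in the permutation model Σ₃: no symmetric relation can uniformly select, for each n, an (n+1)-element subset of {0} × ℕ.) -/
import Mathlib


/-- Membership in the group `𝔊` underlying the permutation model `Σ₃`: permutations of
`I = Fin 2 × ℕ` fixing every point of `{1} × ℕ`. -/
def InG3 (π : Equiv.Perm (Fin 2 × ℕ)) : Prop :=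
  ∀ n : ℕ, π (1, n) = (1, n)

/-- `ρ ⊆ I × I` is `K`-symmetric (for `K ⊆ ℕ`): for every `π ∈ 𝔊` fixing every point of
`{0} × K`, `(π ξ, π η) ∈ ρ ↔ (ξ, η) ∈ ρ`. -/
def SymmRel3 (K : Set ℕ) (ρ : Set ((Fin 2 × ℕ) × (Fin 2 × ℕ))) : Prop :=
  ∀ π : Equiv.Perm (Fin 2 × ℕ), InG3 π → (∀ k ∈ K, π (0, k) = (0, k)) →
    ∀ ξ η : Fin 2 × ℕ, ((π ξ, π η) ∈ ρ ↔ (ξ, η) ∈ ρ)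

/-- Combinatorial core of the failure of `choice_h^{1,1}` in `Σ₃`: no symmetric relation
can select, for each `n`, an `(n+1)`-element subset of `{0} × ℕ`. -/
theorem stmt_13 :
    ¬ ∃ (K : Set ℕ) (σ : Set ((Fin 2 × ℕ) × (Fin 2 × ℕ))), K.Finite ∧ SymmRel3 K σ ∧
      ∀ n : ℕ,
        Set.ncard {μ : ℕ |
          ((((1 : Fin 2), n) : Fin 2 × ℕ), (((0 : Fin 2), μ) : Fin 2 × ℕ)) ∈ σ} = n + 1 := by
  rintro ⟨K, σ, hK, hsym, hcard⟩
  set n := K.ncard with hn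
  set S : Set ℕ := {μ : ℕ |
      ((((1 : Fin 2), n) : Fin 2 × ℕ), (((0 : Fin 2), μ) : Fin 2 × ℕ)) ∈ σ} with hS
  have hScard : S.ncard = n + 1 := hcard n
  have hSfin : S.Finite := by
    by_contra h
    rw [Set.Infinite.ncard (h)] at hScard
    exact (Nat.succ_ne_zero n) hScard.symm
  -- S ⊆ K
  have hsub : S ⊆ K := by
    intro μ hμ
    by_contra hμK
    obtain ⟨ν, hν⟩ := ((hK.union hSfin).infinite_compl).nonempty
    simp only [Set.mem_compl_iff, Set.mem_union, not_or] at hν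
    obtain ⟨hνK, hνS⟩ := hν
    have hμν : μ ≠ ν := fun h => hνS (h ▸ hμ)
    set π : Equiv.Perm (Fin 2 × ℕ) :=
      Equiv.swap ((0 : Fin 2), μ) ((0 : Fin 2), ν) with hπ
    have hG : InG3 π := by
      intro m
      apply Equiv.swap_apply_of_ne_of_ne <;> simp [Prod.ext_iff]
    have hfix : ∀ k ∈ K, π ((0 : Fin 2), k) = ((0 : Fin 2), k) := by
      intro k hk
      apply Equiv.swap_apply_of_ne_of_ne <;>
        simp only [ne_eq, Prod.mk.injEq, not_and] <;>
        intro _ <;> rintro rfl <;> exact absurd hk (by assumption)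
    have := hsym π hG hfix ((1 : Fin 2), n) ((0 : Fin 2), μ)
    rw [hG n, Equiv.swap_apply_left] at this
    exact hνS (this.mpr hμ)
  have := Set.ncard_le_ncard hsub hK
  omega
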